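/- Let x ∈ K^n, v a rational point with associated integer vector v ∈ F_q[X]^{n+1}. For t ∈ Z, ||g_t u_x v|| = H(v) · max(e^{-nt}, e^t · d(x, v)). Consequently |⟨e_1, g_t u_x v⟩| = ||g_t u_x v|| holds if and only if t ≤ -(1/(n+1)) log d(x, v) (when d(x,v) > 0). -/

import Mathlib

open scoped Classical ENNReal
noncomputable section

/-- The absolute value on `K = 𝔽_q((X⁻¹))`, modelled as Laurent series in `T = X⁻¹`:
`|x| = e^{-(order of x)}`, so that `|X| = e`. -/
def kabs {Fq : Type} [Field Fq] (x : LaurentSeries Fq) : ℝ :=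
  if x = 0 then 0 else Real.exp (-(x.order : ℝ))

lemma kabs_nonneg {Fq : Type} [Field Fq] (x : LaurentSeries Fq) : 0 ≤ kabs x := by
  unfold kabs; split <;> positivity

lemma kabs_eq_zero {Fq : Type} [Field Fq] {x : LaurentSeries Fq} :
    kabs x = 0 ↔ x = 0 := by
  unfold kabs; split
  · simp_all
  · simp_all [Real.exp_ne_zero]

lemma kabs_neg {Fq : Type} [Field Fq] (x : LaurentSeries Fq) : kabs (-x) = kabs x := by
  unfold kabs
  simp [HahnSeries.order_neg, neg_eq_zero]

lemma kabs_add_le {Fq : Type} [Field Fq] (x y : LaurentSeries Fq) :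
    kabs (x + y) ≤ max (kabs x) (kabs y) := by
  by_cases hx : x = 0
  · simp [hx, le_max_iff, le_refl]
  by_cases hy : y = 0
  · simp [hy, le_max_iff, le_refl]
  by_cases hxy : x + y = 0
  · simp only [hxy, kabs, if_pos rfl, le_max_iff]
    left; exact kabs_nonneg x |>.trans (by simp [kabs, hx, le_refl])
  · have h := HahnSeries.min_order_le_order_add hxy
    simp only [kabs, if_neg hx, if_neg hy, if_neg hxy, le_max_iff]
    rcases le_total x.order y.order with h' | h'
    · left
      apply Real.exp_le_exp.2
      have : x.order ≤ (x + y).order := le_trans (by simp [min_eq_left h']) h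
      have h2 : (x.order : ℝ) ≤ ((x + y).order : ℝ) := by exact_mod_cast this
      linarith
    · right
      apply Real.exp_le_exp.2
      have : y.order ≤ (x + y).order := le_trans (by simp [min_eq_right h']) h
      have h2 : (y.order : ℝ) ≤ ((x + y).order : ℝ) := by exact_mod_cast this
      linarith

instance (priority := 10000) kMetric (Fq : Type) [Field Fq] :
    MetricSpace (LaurentSeries Fq) where
  dist x y := kabs (x - y)
  dist_self x := by simp [kabs]
  dist_comm x y := by
    show kabs (x - y) = kabs (y - x)
    have h : x - y = -(y - x) := by ring
    rw [h, kabs_neg]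
  dist_triangle x y z := by
    have h := kabs_add_le (x - y) (y - z)
    rw [sub_add_sub_cancel] at h
    exact h.trans (max_le (le_add_of_nonneg_right (kabs_nonneg _))
      (le_add_of_nonneg_left (kabs_nonneg _)))
  eq_of_dist_eq_zero h := sub_eq_zero.mp (kabs_eq_zero.mp h)

/-- The embedding of `𝔽_q[X]` into `K`, sending `X` to `T⁻¹`. -/
def polyK (Fq : Type) [Field Fq] : Polynomial Fq →+* LaurentSeries Fq :=
  (Polynomial.aeval (HahnSeries.single (-1 : ℤ) (1 : Fq))).toRingHom

/-- The element `X` of `K`. -/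
def Xe (Fq : Type) [Field Fq] : LaurentSeries Fq := HahnSeries.single (-1 : ℤ) 1

/-- Sup norm on `K^m`. -/
def supNorm {Fq : Type} [Field Fq] {m : ℕ} (v : Fin m → LaurentSeries Fq) : ℝ :=
  ⨆ i, kabs (v i)

/-- The diagonal flow `g_t = diag(X^{-nt}, X^t, …, X^t)`. -/
def gMat (Fq : Type) [Field Fq] (n : ℕ) (t : ℤ) :
    Matrix (Fin (n+1)) (Fin (n+1)) (LaurentSeries Fq) :=
  Matrix.diagonal (fun i => if i = 0 then Xe Fq ^ (-(n : ℤ) * t) else Xe Fq ^ t)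

/-- The unipotent matrix `u_x` with first column `(1, -x_1, …, -x_n)ᵀ`. -/
def uMat {Fq : Type} [Field Fq] {n : ℕ} (x : Fin n → LaurentSeries Fq) :
    Matrix (Fin (n+1)) (Fin (n+1)) (LaurentSeries Fq) :=
  Matrix.of fun i j =>
    if i = j then 1 else if hi : i = 0 then 0 else if j = 0 then -x (i.pred hi) else 0

/-- The integer vector `(g, f_1, …, f_n)` associated to a rational point. -/
def assocVec {Fq : Type} [Field Fq] {n : ℕ} (f : Fin n → Polynomial Fq)
    (g : Polynomial Fq) : Fin (n+1) → LaurentSeries Fq :=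
  Fin.cons (polyK Fq g) fun i => polyK Fq (f i)

/-- The height `H(v) = max(|g|, |f_1|, …, |f_n|)`. -/
def height {Fq : Type} [Field Fq] {n : ℕ} (f : Fin n → Polynomial Fq)
    (g : Polynomial Fq) : ℝ :=
  supNorm (assocVec f g)

/-- The rational point `(f_1/g, …, f_n/g) ∈ K^n`. -/
def ratPt {Fq : Type} [Field Fq] {n : ℕ} (f : Fin n → Polynomial Fq)
    (g : Polynomial Fq) : Fin n → LaurentSeries Fq :=
  fun i => polyK Fq (f i) / polyK Fq g

/-- Points of the lattice `A · 𝔽_q[X]^m` in `K^m`. -/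
def latticePts {Fq : Type} [Field Fq] {m : ℕ}
    (A : Matrix (Fin m) (Fin m) (LaurentSeries Fq)) :
    Set (Fin m → LaurentSeries Fq) :=
  {w | ∃ p : Fin m → Polynomial Fq, w = A.mulVec fun i => polyK Fq (p i)}

/-- First minimum of the lattice `A · 𝔽_q[X]^m`. -/
def lambda1 {Fq : Type} [Field Fq] {m : ℕ}
    (A : Matrix (Fin m) (Fin m) (LaurentSeries Fq)) : ℝ :=
  sInf {r | ∃ w ∈ latticePts A, w ≠ 0 ∧ r = supNorm w}

/-- `i`-th successive minimum of the lattice `A · 𝔽_q[X]^m`. -/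
def succMin {Fq : Type} [Field Fq] {m : ℕ}
    (A : Matrix (Fin m) (Fin m) (LaurentSeries Fq)) (i : ℕ) : ℝ :=
  sInf {r | ∃ v : Fin i → (Fin m → LaurentSeries Fq),
    (∀ j, v j ∈ latticePts A) ∧ LinearIndependent (LaurentSeries Fq) v ∧
    ∀ j, supNorm (v j) ≤ r}

/-- `x` is `ψ`-approximable. -/
def IsPsiApprox {Fq : Type} [Field Fq] {n : ℕ} (ψ : ℝ → ℝ)
    (x : Fin n → LaurentSeries Fq) : Prop :=
  {fg : (Fin n → Polynomial Fq) × Polynomial Fq | fg.2 ≠ 0 ∧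
    supNorm (fun i => x i - polyK Fq (fg.1 i) / polyK Fq fg.2) <
      ψ (kabs (polyK Fq fg.2))}.Infinite

/-- The set `Exact(ψ)` in the ultrametric formulation. -/
def ExactSet (Fq : Type) [Field Fq] (n : ℕ) (ψ : ℝ → ℝ) :
    Set (Fin n → LaurentSeries Fq) :=
  {x | (∀ i, kabs (x i) ≤ 1) ∧
    {fg : (Fin n → Polynomial Fq) × Polynomial Fq | fg.2 ≠ 0 ∧
      supNorm (fun i => x i - polyK Fq (fg.1 i) / polyK Fq fg.2) =
        ψ (kabs (polyK Fq fg.2))}.Infinite ∧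
    ∃ G : ℝ, ∀ (f : Fin n → Polynomial Fq) (g : Polynomial Fq), g ≠ 0 →
      G ≤ kabs (polyK Fq g) →
      ψ (kabs (polyK Fq g)) ≤ supNorm fun i => x i - polyK Fq (f i) / polyK Fq g}

/-- The lower order of infinity `λ_ψ` of `ψ`. -/
def lambdaPsi (ψ : ℝ → ℝ) : ℝ≥0∞ :=
  Filter.liminf (fun s => ENNReal.ofReal (-Real.log (ψ s) / Real.log s)) Filter.atTop

/-! Writing `v = (g, f)` as `Fin.cons g f`, one has `u_x v = (g, f_i - x_i g)` and
`f_i - x_i g = -g (x_i - f_i/g)`, so `g_t u_x v = (X^{-nt} g, -X^t g (x_i - f_i/g))`.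
The absolute value is multiplicative with `|X| = e`, hence the sup norm of this vector is
`|g| max(e^{-nt}, e^t d(x, v))`, and `|g| = H(v)` because `|f_i| ≤ |g|`. The first coordinate
realizes the norm iff `e^t d(x, v) ≤ e^{-nt}`, i.e. `(n + 1) t ≤ -log d(x, v)`. -/

section AbsoluteValue
variable {Fq : Type} [Field Fq]

lemma kabs_mul (x y : LaurentSeries Fq) : kabs (x * y) = kabs x * kabs y := by
  by_cases hx : x = 0; · simp [hx, kabs]
  by_cases hy : y = 0; · simp [hy, kabs]
  simp only [kabs, if_neg hx, if_neg hy, if_neg (mul_ne_zero hx hy),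
    HahnSeries.order_mul hx hy, ← Real.exp_add]
  push_cast; ring_nf

lemma kabs_pos {x : LaurentSeries Fq} (hx : x ≠ 0) : 0 < kabs x :=
  (kabs_nonneg x).lt_of_ne' (kabs_eq_zero.not.mpr hx)

def kabsHom : LaurentSeries Fq →*₀ ℝ where
  toFun := kabs
  map_zero' := by simp [kabs]
  map_one' := by simp [kabs]
  map_mul' := kabs_mul

lemma kabs_Xe : kabs (Xe Fq) = Real.exp 1 := by
  rw [kabs, Xe, if_neg (HahnSeries.single_ne_zero one_ne_zero),
    HahnSeries.order_single one_ne_zero]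
  norm_num

lemma kabs_Xe_zpow (k : ℤ) : kabs (Xe Fq ^ k) = Real.exp k := by
  rw [← Real.exp_one_rpow, Real.rpow_intCast, ← kabs_Xe (Fq := Fq)]
  exact map_zpow₀ (kabsHom : LaurentSeries Fq →*₀ ℝ) (Xe Fq) k

lemma polyK_coeff_neg_natCast (p : Polynomial Fq) (k : ℕ) :
    (polyK Fq p).coeff (-k) = p.coeff k := by
  conv_lhs => rw [p.as_sum_support]
  simp only [polyK, AlgHom.toRingHom_eq_coe, RingHom.coe_coe, map_sum, Polynomial.aeval_monomial,
    HahnSeries.single_pow, HahnSeries.algebraMap_apply', PowerSeries.algebraMap_apply,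
    HahnSeries.coeff_sum]
  simp [HahnSeries.ofPowerSeries_C, HahnSeries.C_apply, HahnSeries.coeff_single, eq_comm]

lemma polyK_injective : Function.Injective (polyK Fq) :=
  (injective_iff_map_eq_zero _).mpr fun p hp =>
    Polynomial.ext fun k => by simpa [hp] using (polyK_coeff_neg_natCast p k).symm

end AbsoluteValue

section SupNorm
variable {Fq : Type} [Field Fq] {m : ℕ}

lemma supNorm_nonneg (v : Fin m → LaurentSeries Fq) : 0 ≤ supNorm v :=
  Real.iSup_nonneg fun i => kabs_nonneg (v i)

lemma kabs_le_supNorm (v : Fin m → LaurentSeries Fq) (i : Fin m) : kabs (v i) ≤ supNorm v :=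
  le_ciSup (f := fun i => kabs (v i)) (Set.finite_range _).bddAbove i

lemma supNorm_le {v : Fin m → LaurentSeries Fq} {r : ℝ} (hr : 0 ≤ r)
    (h : ∀ i, kabs (v i) ≤ r) : supNorm v ≤ r :=
  Real.iSup_le h hr

lemma supNorm_cons (a : LaurentSeries Fq) (u : Fin m → LaurentSeries Fq) :
    supNorm (Fin.cons a u : Fin (m + 1) → LaurentSeries Fq) = max (kabs a) (supNorm u) := by
  refine le_antisymm (supNorm_le (le_max_of_le_left (kabs_nonneg a)) fun i => ?_)
    (max_le ?_ (supNorm_le (supNorm_nonneg _) fun i => ?_))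
  · cases i using Fin.cases with
    | zero => exact le_max_left _ _
    | succ i => exact le_max_of_le_right (kabs_le_supNorm u i)
  · simpa using kabs_le_supNorm (Fin.cons a u : Fin (m + 1) → LaurentSeries Fq) 0
  · simpa using kabs_le_supNorm (Fin.cons a u : Fin (m + 1) → LaurentSeries Fq) i.succ

lemma kabs_eq_supNorm_cons_iff (a : LaurentSeries Fq) (u : Fin m → LaurentSeries Fq) :
    kabs a = supNorm (Fin.cons a u : Fin (m + 1) → LaurentSeries Fq) ↔
      supNorm u ≤ kabs a := by
  rw [supNorm_cons, eq_comm, max_eq_left_iff]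

lemma supNorm_const_mul (c : LaurentSeries Fq) (u : Fin m → LaurentSeries Fq) :
    supNorm (fun i => c * u i) = kabs c * supNorm u := by
  simp only [supNorm, kabs_mul, Real.mul_iSup_of_nonneg (kabs_nonneg c)]

end SupNorm

section Flow
variable {Fq : Type} [Field Fq] {n : ℕ}

lemma uMat_mulVec_cons (x : Fin n → LaurentSeries Fq) (a : LaurentSeries Fq)
    (u : Fin n → LaurentSeries Fq) :
    (uMat x).mulVec (Fin.cons a u) = Fin.cons a fun i => u i - x i * a := by
  funext i
  cases i using Fin.cases <;>
    simp [Matrix.mulVec, dotProduct, uMat, Fin.sum_univ_succ, neg_add_eq_sub]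

lemma gMat_mulVec_cons (t : ℤ) (a : LaurentSeries Fq) (u : Fin n → LaurentSeries Fq) :
    (gMat Fq n t).mulVec (Fin.cons a u) =
      Fin.cons (Xe Fq ^ (-(n : ℤ) * t) * a) fun i => Xe Fq ^ t * u i := by
  funext i
  cases i using Fin.cases <;> simp [gMat, Matrix.mulVec_diagonal]

end Flow

section RationalPoint
variable {Fq : Type} [Field Fq] {n : ℕ} (f : Fin n → Polynomial Fq) {g : Polynomial Fq}

lemma height_eq_kabs_polyK (hZO : ∀ i, kabs (polyK Fq (f i)) ≤ kabs (polyK Fq g)) :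
    height f g = kabs (polyK Fq g) := by
  rw [height, assocVec, supNorm_cons, max_eq_left (supNorm_le (kabs_nonneg _) hZO)]

lemma supNorm_polyK_sub_mul (x : Fin n → LaurentSeries Fq) (hg : g ≠ 0) :
    supNorm (fun i => polyK Fq (f i) - x i * polyK Fq g) =
      kabs (polyK Fq g) * supNorm (fun i => x i - ratPt f g i) := by
  have hG : polyK Fq g ≠ 0 := (map_ne_zero_iff _ polyK_injective).mpr hg
  rw [← supNorm_const_mul]
  unfold supNorm
  congr 1
  funext i
  rw [← kabs_neg]
  congr 1
  simp only [ratPt]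
  field_simp
  ring

end RationalPoint

lemma exp_mul_le_exp_neg_mul_iff {a t D : ℝ} (ha : 0 < a + 1) (hD : 0 < D) :
    Real.exp t * D ≤ Real.exp (-a * t) ↔ t ≤ -(1 / (a + 1)) * Real.log D := by
  rw [← Real.log_le_log_iff (by positivity) (Real.exp_pos _),
    Real.log_mul (Real.exp_ne_zero _) hD.ne', Real.log_exp, Real.log_exp,
    show -(1 / (a + 1)) * Real.log D = -Real.log D / (a + 1) by ring, le_div_iff₀ ha]
  constructor <;> intro h <;> linarith

theorem norm_formula_general (Fq : Type) [Field Fq] (n : ℕ)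
    (x : Fin n → LaurentSeries Fq)
    (f : Fin n → Polynomial Fq) (g : Polynomial Fq) (hg : g ≠ 0)
    (hZO : ∀ i, kabs (polyK Fq (f i)) ≤ kabs (polyK Fq g)) (t : ℤ) :
    supNorm ((gMat Fq n t * uMat x).mulVec (assocVec f g)) =
      height f g * max (Real.exp (-(n : ℝ) * t))
        (Real.exp t * supNorm (fun i => x i - ratPt f g i)) ∧
    (0 < supNorm (fun i => x i - ratPt f g i) →
      (kabs ((gMat Fq n t * uMat x).mulVec (assocVec f g) 0) =
          supNorm ((gMat Fq n t * uMat x).mulVec (assocVec f g)) ↔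
        (t : ℝ) ≤ -(1 / ((n : ℝ) + 1)) *
          Real.log (supNorm fun i => x i - ratPt f g i))) := by
  have hG : 0 < kabs (polyK Fq g) := kabs_pos ((map_ne_zero_iff _ polyK_injective).mpr hg)
  have hw : (gMat Fq n t * uMat x).mulVec (assocVec f g) =
      Fin.cons (Xe Fq ^ (-(n : ℤ) * t) * polyK Fq g)
        fun i => Xe Fq ^ t * (polyK Fq (f i) - x i * polyK Fq g) := by
    rw [← Matrix.mulVec_mulVec, assocVec, uMat_mulVec_cons, gMat_mulVec_cons]
  have hhead : kabs (Xe Fq ^ (-(n : ℤ) * t) * polyK Fq g) =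
      Real.exp (-(n : ℝ) * t) * kabs (polyK Fq g) := by
    rw [kabs_mul, kabs_Xe_zpow]
    push_cast
    rfl
  have htail : supNorm (fun i => Xe Fq ^ t * (polyK Fq (f i) - x i * polyK Fq g)) =
      Real.exp t * supNorm (fun i => x i - ratPt f g i) * kabs (polyK Fq g) := by
    rw [supNorm_const_mul, kabs_Xe_zpow, supNorm_polyK_sub_mul f x hg]
    ring
  refine ⟨?_, fun hD => ?_⟩
  · rw [hw, supNorm_cons, hhead, htail, height_eq_kabs_polyK f hZO,
      ← max_mul_of_nonneg _ _ hG.le, mul_comm]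
  · rw [hw, Fin.cons_zero, kabs_eq_supNorm_cons_iff, hhead, htail,
      mul_le_mul_iff_left₀ hG, exp_mul_le_exp_neg_mul_iff (by positivity) hD]

/-- `‖g_t u_x v‖ = H(v) max(e^{-nt}, e^t d(x,v))` and the criterion for
the first coordinate to realize the norm. -/
theorem norm_formula (Fq : Type) [Field Fq] [Fintype Fq] (n : ℕ) (hn : 0 < n)
    (x : Fin n → LaurentSeries Fq)
    (f : Fin n → Polynomial Fq) (g : Polynomial Fq) (hg : g ≠ 0)
    (hZO : ∀ i, kabs (polyK Fq (f i)) ≤ kabs (polyK Fq g)) (t : ℤ) :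
    supNorm ((gMat Fq n t * uMat x).mulVec (assocVec f g)) =
      height f g * max (Real.exp (-(n : ℝ) * t))
        (Real.exp t * supNorm (fun i => x i - ratPt f g i)) ∧
    (0 < supNorm (fun i => x i - ratPt f g i) →
      (kabs ((gMat Fq n t * uMat x).mulVec (assocVec f g) 0) =
          supNorm ((gMat Fq n t * uMat x).mulVec (assocVec f g)) ↔
        (t : ℝ) ≤ -(1 / ((n : ℝ) + 1)) *
          Real.log (supNorm fun i => x i - ratPt f g i))) :=
  norm_formula_general Fq n x f g hg hZO t
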